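/- Let E be a real inner product space, let ε > 0, and let x₁, x₂ ∈ E with x₁ ≠ x₂ and d := ‖x₂ − x₁‖ ≤ 2ε. Let x_t ∈ E with x_t ≠ x₁ and ‖x_t − x₂‖ ≤ ε. If the normalised inner product φ := ⟨x₂ − x₁, x_t − x₁⟩ / (‖x₂ − x₁‖ · ‖x_t − x₁‖) satisfies φ ≥ (1/2)(1 + d/ε), then every point x on the line segment L connecting x₁ to x_t (i.e. every x = (1 − t) x₁ + t x_t with t ∈ [0, 1]) satisfies ‖x − x₁‖ ≤ ε or ‖x − x₂‖ ≤ ε. -/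

import Mathlib

/-!
Put `u = x₂ - x₁` and let `p` be the point of the ray from `x₁` through `x_t` at
distance `ε` from `x₁`. Since `‖p - x₂‖² = ε² - 2⟪u, p - x₁⟫ + ‖u‖²`, the point `p` lies in the closed
ball of radius `ε` about `x₂` as soon as `φ ≥ ‖u‖ / (2ε)`, which the hypothesis on `φ` guarantees.
The endpoint `x_t` lies in that ball too, so by convexity the whole segment from `p` to `x_t` does;
the part of the segment from `x₁` to `p` lies in the ball of radius `ε` about `x₁`.
-/

open RealInnerProductSpace AffineMap

section

variable {E : Type*} [NormedAddCommGroup E] [InnerProductSpace ℝ E]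

theorem norm_sub_le_norm_of_sq_le_two_mul_inner {u w : E} (h : ‖u‖ ^ 2 ≤ 2 * ⟪u, w⟫) :
    ‖w - u‖ ≤ ‖w‖ := by
  refine (pow_le_pow_iff_left₀ (norm_nonneg _) (norm_nonneg _) two_ne_zero).1 ?_
  rw [norm_sub_sq_real, real_inner_comm]
  linarith

theorem norm_smul_div_norm_sub_le {ε : ℝ} (hε : 0 < ε) {u v : E} (hu : u ≠ 0) (hv : v ≠ 0)
    (hφ : ‖u‖ / (2 * ε) ≤ ⟪u, v⟫ / (‖u‖ * ‖v‖)) :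
    ‖(ε / ‖v‖) • v - u‖ ≤ ε := by
  have hu' : 0 < ‖u‖ := norm_pos_iff.2 hu
  have hv' : 0 < ‖v‖ := norm_pos_iff.2 hv
  have hw : ‖(ε / ‖v‖) • v‖ = ε := by
    rw [norm_smul, Real.norm_of_nonneg (by positivity), div_mul_cancel₀ _ hv'.ne']
  rw [div_le_div_iff₀ (by positivity) (mul_pos hu' hv')] at hφ
  calc ‖(ε / ‖v‖) • v - u‖ ≤ ‖(ε / ‖v‖) • v‖ := by
        refine norm_sub_le_norm_of_sq_le_two_mul_inner ?_
        rw [real_inner_smul_right, ← mul_assoc, mul_div_assoc', div_mul_eq_mul_div, le_div_iff₀ hv']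
        linarith
    _ = ε := hw

end

theorem maximum_angle_of_deviation_general
    {E : Type*} [NormedAddCommGroup E] [InnerProductSpace ℝ E]
    (ε : ℝ) (hε : 0 < ε) (x₁ x₂ xt : E) (hx : x₁ ≠ x₂) (hxt : xt ≠ x₁)
    (hxt2 : ‖xt - x₂‖ ≤ ε)
    (hφ : ⟪x₂ - x₁, xt - x₁⟫ / (‖x₂ - x₁‖ * ‖xt - x₁‖) ≥ (1 / 2) * (1 + ‖x₂ - x₁‖ / ε)) :
    ∀ t : ℝ, t ∈ Set.Icc (0 : ℝ) 1 →
      ‖((1 - t) • x₁ + t • xt) - x₁‖ ≤ ε ∨ ‖((1 - t) • x₁ + t • xt) - x₂‖ ≤ ε := by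
  rintro t ⟨ht0, ht1⟩
  set s := ε / ‖xt - x₁‖
  simp only [← lineMap_apply_module, ← dist_eq_norm]
  rcases le_or_gt t s with hts | hst
  · left
    rw [dist_lineMap_left, Real.norm_of_nonneg ht0, dist_eq_norm', ← le_div_iff₀]
    · exact hts
    · exact norm_pos_iff.2 (sub_ne_zero.2 hxt)
  · right
    have hball : Set.OrdConnected {c : ℝ | dist (lineMap x₁ xt c) x₂ ≤ ε} :=
      ((convex_closedBall x₂ ε).affine_preimage (lineMap x₁ xt)).ordConnected
    have hs : dist (lineMap x₁ xt s) x₂ ≤ ε := by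
      rw [lineMap_apply_module', dist_eq_norm, add_sub_assoc, ← neg_sub x₂ x₁, ← sub_eq_add_neg]
      refine norm_smul_div_norm_sub_le hε (sub_ne_zero.2 hx.symm) (sub_ne_zero.2 hxt) ?_
      rw [mul_comm, ← div_div]
      linarith
    have h1 : dist (lineMap x₁ xt (1 : ℝ)) x₂ ≤ ε := by
      rwa [lineMap_apply_one, dist_eq_norm]
    exact hball.out hs h1 ⟨hst.le, ht1⟩

/-- Theorem 1 (Maximum Angle of Deviation): if the normalised inner product between
`x₂ - x₁` and `x_t - x₁` is at least `(1/2)(1 + d/ε)`, then every point on the segment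
from `x₁` to `x_t` is within `ε` of `x₁` or of `x₂`. -/
theorem maximum_angle_of_deviation
    {E : Type*} [NormedAddCommGroup E] [InnerProductSpace ℝ E]
    (ε : ℝ) (hε : 0 < ε) (x₁ x₂ xt : E) (hx : x₁ ≠ x₂) (hxt : xt ≠ x₁)
    (hd : ‖x₂ - x₁‖ ≤ 2 * ε) (hxt2 : ‖xt - x₂‖ ≤ ε)
    (hφ : ⟪x₂ - x₁, xt - x₁⟫ / (‖x₂ - x₁‖ * ‖xt - x₁‖) ≥ (1 / 2) * (1 + ‖x₂ - x₁‖ / ε)) :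
    ∀ t : ℝ, t ∈ Set.Icc (0 : ℝ) 1 →
      ‖((1 - t) • x₁ + t • xt) - x₁‖ ≤ ε ∨ ‖((1 - t) • x₁ + t • xt) - x₂‖ ≤ ε :=
  maximum_angle_of_deviation_general ε hε x₁ x₂ xt hx hxt hxt2 hφ
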